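/- In the binomial model, if S = (0,y] ∩ 𝕏 is an equilibrium for some y ∈ S ∩ (0,K), then y ≤ U·K, where U := (1 − (1−p)/(1+β) − p·α') / (1 − (1−p)/(u(1+β)) − p·α') and α' := E^1[1/(1+β(ξ+1))], with ξ the first hitting time of 0 by the random walk Y on ℤ with i.i.d. steps +1 with probability p and −1 with probability 1−p, E^n expectation for Y_0 = n, and the convention 1/(1+β·∞) := 0. -/

import Mathlib

open MeasureTheory ProbabilityTheory Set Filter Topology
open scoped ENNReal ENat

noncomputable section

/-- The σ-algebra generated by the first `n+1` coordinates of the path space: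
the natural filtration of the coordinate process at time `n`. -/
def pathSigma (𝕏 : Type*) [m : MeasurableSpace 𝕏] (n : ℕ) : MeasurableSpace (ℕ → 𝕏) :=
  ⨆ i ∈ Finset.range (n + 1), MeasurableSpace.comap (fun ω : ℕ → 𝕏 => ω i) m

/-- `Pr` is the family of laws of the time-homogeneous Markov chain with one-step
transition kernel `Q`: under `Pr x` the chain starts at `x`, and the Markov property
`Pr^x(X_{n+1} ∈ A | 𝓕_n) = Q(X_n, A)` holds. -/
structure IsMarkovChainLaw {𝕏 : Type*} [MeasurableSpace 𝕏]
    (Pr : Kernel 𝕏 (ℕ → 𝕏)) (Q : Kernel 𝕏 𝕏) : Prop where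
  start : ∀ x : 𝕏, Pr x {ω | ω 0 = x} = 1
  markov : ∀ (x : 𝕏) (n : ℕ) (B : Set (ℕ → 𝕏)), MeasurableSet[pathSigma 𝕏 n] B →
    ∀ A : Set 𝕏, MeasurableSet A →
      Pr x (B ∩ {ω | ω (n + 1) ∈ A}) = ∫⁻ ω in B, Q (ω n) A ∂(Pr x)

/-- The first hitting time `ρ(x,S) = inf {t ≥ 1 : X_t ∈ S}` along the path `ω`
(equal to `⊤` if `S` is never reached at a time `≥ 1`). -/
def hitTime {𝕏 : Type*} (S : Set 𝕏) (ω : ℕ → 𝕏) : ℕ∞ :=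
  sInf {n : ℕ∞ | ∃ t : ℕ, n = (t : ℕ∞) ∧ 1 ≤ t ∧ ω t ∈ S}

/-- The discounted payoff `δ(ρ(x,S)) f(X_{ρ(x,S)})` collected along the path `ω`,
with the convention that it vanishes when `S` is never hit. -/
def stopPayoff {𝕏 : Type*} (δ : ℕ → ℝ) (f : 𝕏 → ℝ) (S : Set 𝕏) (ω : ℕ → 𝕏) : ℝ :=
  if hitTime S ω = ⊤ then 0
  else δ (hitTime S ω).toNat * f (ω (hitTime S ω).toNat)

/-- The objective value `J(x, ρ(x,S)) = 𝔼^x[δ(ρ(x,S)) f(X_{ρ(x,S)})]`. -/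
def valJ {𝕏 : Type*} [MeasurableSpace 𝕏] (Pr : Kernel 𝕏 (ℕ → 𝕏)) (δ : ℕ → ℝ) (f : 𝕏 → ℝ)
    (S : Set 𝕏) (x : 𝕏) : ℝ :=
  ∫ ω, stopPayoff δ f S ω ∂(Pr x)

/-- The operator `Θ(S) = {x ∈ 𝕏 : f(x) ≥ J(x, ρ(x,S))}`. -/
def Θ {𝕏 : Type*} [MeasurableSpace 𝕏] (Pr : Kernel 𝕏 (ℕ → 𝕏)) (δ : ℕ → ℝ) (f : 𝕏 → ℝ)
    (S : Set 𝕏) : Set 𝕏 :=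
  {x | valJ Pr δ f S x ≤ f x}

/-- A Borel set `S ⊆ 𝕏` is an equilibrium if `Θ(S) = S`. -/
def IsEquilibrium {𝕏 : Type*} [MeasurableSpace 𝕏] (Pr : Kernel 𝕏 (ℕ → 𝕏)) (δ : ℕ → ℝ)
    (f : 𝕏 → ℝ) (S : Set 𝕏) : Prop :=
  MeasurableSet S ∧ Θ Pr δ f S = S

/-- The value `V(x,S) = max (f x) (J(x, ρ(x,S)))` associated with an equilibrium `S`. -/
def valV {𝕏 : Type*} [MeasurableSpace 𝕏] (Pr : Kernel 𝕏 (ℕ → 𝕏)) (δ : ℕ → ℝ) (f : 𝕏 → ℝ)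
    (S : Set 𝕏) (x : 𝕏) : ℝ :=
  max (f x) (valJ Pr δ f S x)

/-- The state space `𝕏 = {uⁱ : i ∈ ℤ}` of the binomial model. -/
def binGrid (u : ℝ) : Set ℝ := {x | ∃ i : ℤ, x = u ^ i}

/-- The hyperbolic discount function `δ(t) = 1 / (1 + βt)`. -/
def binDisc (β : ℝ) (t : ℕ) : ℝ := 1 / (1 + β * t)

/-- The payoff function `f(x) = max (K − x) 0`. -/
def binPay (K : ℝ) (x : ℝ) : ℝ := max (K - x) 0

/-- The operator `Θ(S) = {x ∈ 𝕏 : f(x) ≥ J(x, ρ(x,S))}` of the binomial model. -/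
def ΘBin (Pr : Kernel ℝ (ℕ → ℝ)) (u β K : ℝ) (S : Set ℝ) : Set ℝ :=
  {x | x ∈ binGrid u ∧ valJ Pr (binDisc β) (binPay K) S x ≤ binPay K x}

/-- The first hitting time `ξ = inf {t ≥ 0 : Y_t = 0}` of `0` by the random walk path `ω`. -/
def walkHit (ω : ℕ → ℤ) : ℕ∞ :=
  sInf {n : ℕ∞ | ∃ t : ℕ, n = (t : ℕ∞) ∧ ω t = 0}

/-- The discounted quantity `1 / (1 + β(ξ + s))`, equal to `0` on `{ξ = ∞}`. -/
def walkDisc (β : ℝ) (s : ℕ) (ω : ℕ → ℤ) : ℝ :=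
  if walkHit ω = ⊤ then 0 else 1 / (1 + β * ((walkHit ω).toNat + s))

/-- `α_n = E^n[1 / (1 + βξ)]`. -/
def alphaWalk (PrY : Kernel ℤ (ℕ → ℤ)) (β : ℝ) (n : ℤ) : ℝ :=
  ∫ ω, walkDisc β 0 ω ∂(PrY n)

/-- `α' = E^1[1 / (1 + β(ξ + 1))]`. -/
def alphaWalk' (PrY : Kernel ℤ (ℕ → ℤ)) (β : ℝ) : ℝ :=
  ∫ ω, walkDisc β 1 ω ∂(PrY 1)

/-!
Started at `y`, the chain has the law of `y * u ^ Y_t` for the walk `Y` started at `0` (both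
are Markov chain laws with matching kernels, and such laws are unique), and `(0, y] ∩ 𝕏`
corresponds to `{Y ≤ 0}`. Since `y ∈ S = Θ(S)`, we have `K - y ≥ J(y, ρ)`. Condition on the
first step: a down-step stops at once, with value `(K - y/u)/(1+β)`; after an up-step the walk
cannot jump over `0`, so `ρ = ξ + 1` for the walk restarted at `1`, and the stopped value
`(K - y)/(1 + β(ξ + 1))` has expectation `(K - y) α'`. Hence
`K - y ≥ (1 - p)(K - y/u)/(1 + β) + p (K - y) α'`, which rearranges to `y ≤ U K`; the
denominator of `U` is positive because `α' ≤ 1/(1 + β) < 1`.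
-/

section PathSigma

variable {α : Type*} [mα : MeasurableSpace α]

lemma comap_eval_le_pathSigma {i n : ℕ} (h : i ≤ n) :
    mα.comap (fun ω : ℕ → α => ω i) ≤ pathSigma α n :=
  le_iSup₂_of_le (f := fun i (_ : i ∈ Finset.range (n + 1)) => mα.comap fun ω : ℕ → α => ω i)
    i (Finset.mem_range.2 (Nat.lt_succ_of_le h)) le_rfl

lemma measurable_eval_pathSigma {i n : ℕ} (h : i ≤ n) :
    Measurable[pathSigma α n] fun ω : ℕ → α => ω i :=
  measurable_iff_comap_le.2 (comap_eval_le_pathSigma h)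

lemma pathSigma_le_pi (n : ℕ) : pathSigma α n ≤ MeasurableSpace.pi :=
  iSup₂_le fun i _ => measurable_iff_comap_le.1 (measurable_pi_apply i)

lemma pathSigma_mono : Monotone (pathSigma α) := fun _ _ hnm =>
  iSup₂_le fun _ hi =>
    comap_eval_le_pathSigma ((Nat.lt_succ_iff.1 (Finset.mem_range.1 hi)).trans hnm)

lemma iSup_pathSigma : ⨆ n, pathSigma α n = MeasurableSpace.pi :=
  le_antisymm (iSup_le pathSigma_le_pi)
    (iSup_le fun i => (comap_eval_le_pathSigma le_rfl).trans (le_iSup (pathSigma α) i))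

lemma pathSigma_zero : pathSigma α 0 = mα.comap fun ω : ℕ → α => ω 0 :=
  le_antisymm (iSup₂_le fun i hi => by rw [Nat.lt_one_iff.1 (Finset.mem_range.1 hi)])
    (comap_eval_le_pathSigma le_rfl)

lemma pathSigma_succ (n : ℕ) :
    pathSigma α (n + 1) = pathSigma α n ⊔ mα.comap fun ω : ℕ → α => ω (n + 1) := by
  refine le_antisymm (iSup₂_le fun i hi => ?_)
    (sup_le (pathSigma_mono n.le_succ) (comap_eval_le_pathSigma le_rfl))
  rcases Nat.lt_succ_iff_lt_or_eq.1 (Finset.mem_range.1 hi) with hi | rfl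
  · exact (comap_eval_le_pathSigma (Nat.lt_succ_iff.1 hi)).trans le_sup_left
  · exact le_sup_right

def pathSigmaSuccGenerators (α : Type*) [MeasurableSpace α] (n : ℕ) : Set (Set (ℕ → α)) :=
  {B | ∃ B₀ A, MeasurableSet[pathSigma α n] B₀ ∧ MeasurableSet A ∧
    B = B₀ ∩ {ω | ω (n + 1) ∈ A}}

lemma generateFrom_pathSigmaSuccGenerators (n : ℕ) :
    MeasurableSpace.generateFrom (pathSigmaSuccGenerators α n) = pathSigma α (n + 1) := by
  refine le_antisymm (MeasurableSpace.generateFrom_le ?_) ?_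
  · rintro _ ⟨B₀, A, hB₀, hA, rfl⟩
    exact (pathSigma_mono n.le_succ _ hB₀).inter (measurable_eval_pathSigma le_rfl hA)
  · rw [pathSigma_succ]
    refine sup_le (fun B hB => .basic _ ⟨B, univ, hB, .univ, by simp⟩) ?_
    rintro _ ⟨A, hA, rfl⟩
    exact .basic _ ⟨univ, A, .univ, hA, by simp; rfl⟩

lemma isPiSystem_pathSigmaSuccGenerators (n : ℕ) :
    IsPiSystem (pathSigmaSuccGenerators α n) := by
  rintro _ ⟨B₁, A₁, hB₁, hA₁, rfl⟩ _ ⟨B₂, A₂, hB₂, hA₂, rfl⟩ -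
  exact ⟨B₁ ∩ B₂, A₁ ∩ A₂, hB₁.inter hB₂, hA₁.inter hA₂, by ext; simp; tauto⟩

lemma comap_pathSigma_le {β : Type*} [MeasurableSpace β] {Φ : (ℕ → α) → ℕ → β} {n m : ℕ}
    (h : ∀ i ≤ n, Measurable[pathSigma α m] fun ω => Φ ω i) :
    (pathSigma β n).comap Φ ≤ pathSigma α m := by
  simp only [pathSigma, MeasurableSpace.comap_iSup, MeasurableSpace.comap_comp]
  exact iSup₂_le fun i hi =>
    measurable_iff_comap_le.1 (h i (Nat.lt_succ_iff.1 (Finset.mem_range.1 hi)))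

lemma measurableSet_coord_mem (t : ℕ) {A : Set α} (hA : MeasurableSet A) :
    MeasurableSet {ω : ℕ → α | ω t ∈ A} :=
  hA.preimage (measurable_pi_apply t)

lemma measurableSet_coord_eq [MeasurableSingletonClass α] (t : ℕ) (a : α) :
    MeasurableSet {ω : ℕ → α | ω t = a} :=
  measurableSet_coord_mem t (measurableSet_singleton a)

end PathSigma

section MarkovChain

variable {α : Type*} [MeasurableSpace α] {Q : Kernel α α} {x : α} {μ ν : Measure (ℕ → α)}

structure IsMarkovChainFrom (Q : Kernel α α) (x : α) (μ : Measure (ℕ → α)) : Prop where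
  start : μ {ω | ω 0 = x} = 1
  markov : ∀ (n : ℕ) (B : Set (ℕ → α)), MeasurableSet[pathSigma α n] B →
    ∀ A : Set α, MeasurableSet A → μ (B ∩ {ω | ω (n + 1) ∈ A}) = ∫⁻ ω in B, Q (ω n) A ∂μ

lemma IsMarkovChainLaw.isMarkovChainFrom {Pr : Kernel α (ℕ → α)} (h : IsMarkovChainLaw Pr Q)
    (x : α) : IsMarkovChainFrom Q x (Pr x) :=
  ⟨h.start x, h.markov x⟩

namespace IsMarkovChainFrom

variable [MeasurableSingletonClass α]

lemma ae_coord_zero_eq [IsProbabilityMeasure μ] (hμ : IsMarkovChainFrom Q x μ) :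
    ∀ᵐ ω ∂μ, ω 0 = x :=
  mem_ae_iff.2 <| (prob_compl_eq_zero_iff (measurableSet_coord_eq 0 x)).2 hμ.start

lemma measure_coord_zero_mem [IsProbabilityMeasure μ] (hμ : IsMarkovChainFrom Q x μ)
    (A : Set α) : μ {ω | ω 0 ∈ A} = A.indicator 1 x := by
  by_cases hx : x ∈ A
  · rw [indicator_of_mem hx, Pi.one_apply]
    exact le_antisymm prob_le_one
      (hμ.start ▸ measure_mono fun ω (hω : ω 0 = x) => show ω 0 ∈ A from hω ▸ hx)
  · rw [indicator_of_notMem hx]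
    exact measure_mono_null (fun ω (hω : ω 0 ∈ A) (h : ω 0 = x) => hx (h ▸ hω))
      hμ.ae_coord_zero_eq

lemma trim_pathSigma_eq [IsProbabilityMeasure μ] [IsProbabilityMeasure ν]
    (hμ : IsMarkovChainFrom Q x μ) (hν : IsMarkovChainFrom Q x ν) (n : ℕ) :
    μ.trim (pathSigma_le_pi n) = ν.trim (pathSigma_le_pi n) := by
  induction n with
  | zero =>
    refine @Measure.ext _ (pathSigma α 0) _ _ fun s hs => ?_
    rw [trim_measurableSet_eq _ hs, trim_measurableSet_eq _ hs]
    rw [pathSigma_zero] at hs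
    obtain ⟨A, -, rfl⟩ := hs
    exact (hμ.measure_coord_zero_mem A).trans (hν.measure_coord_zero_mem A).symm
  | succ n ih =>
    refine @ext_of_generate_finite _ (pathSigma α (n + 1)) _ _ _
      (generateFrom_pathSigmaSuccGenerators n).symm (isPiSystem_pathSigmaSuccGenerators n) _
      ?_ ?_
    · rintro _ ⟨B₀, A, hB₀, hA, rfl⟩
      have hB : MeasurableSet[pathSigma α (n + 1)] (B₀ ∩ {ω | ω (n + 1) ∈ A}) :=
        generateFrom_pathSigmaSuccGenerators (α := α) n ▸ .basic _ ⟨B₀, A, hB₀, hA, rfl⟩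
      have hQ : Measurable[pathSigma α n] (B₀.indicator fun ω => Q (ω n) A) :=
        ((Q.measurable_coe hA).comp (measurable_eval_pathSigma le_rfl)).indicator hB₀
      have hB₀' := pathSigma_le_pi n _ hB₀
      rw [trim_measurableSet_eq _ hB, trim_measurableSet_eq _ hB, hμ.markov n B₀ hB₀ A hA,
        hν.markov n B₀ hB₀ A hA, ← lintegral_indicator hB₀', ← lintegral_indicator hB₀',
        ← lintegral_trim (pathSigma_le_pi n) hQ, ih, lintegral_trim _ hQ]
    · rw [trim_measurableSet_eq _ .univ, trim_measurableSet_eq _ .univ, measure_univ,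
        measure_univ]

theorem unique [IsProbabilityMeasure μ] [IsProbabilityMeasure ν]
    (hμ : IsMarkovChainFrom Q x μ) (hν : IsMarkovChainFrom Q x ν) : μ = ν := by
  refine ext_of_generate_finite (⋃ n, {s | MeasurableSet[pathSigma α n] s}) ?_
    (isPiSystem_iUnion_of_monotone _
      (fun n => @MeasurableSpace.isPiSystem_measurableSet _ (pathSigma α n))
      fun _ _ hnm _ hs => pathSigma_mono hnm _ hs) ?_ (by simp)
  · exact ((MeasurableSpace.generateFrom_iUnion_measurableSet _).trans iSup_pathSigma).symm
  · intro s hs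
    obtain ⟨n, hs : MeasurableSet[pathSigma α n] s⟩ := mem_iUnion.1 hs
    rw [← trim_measurableSet_eq (pathSigma_le_pi n) hs, trim_pathSigma_eq hμ hν n,
      trim_measurableSet_eq _ hs]

end IsMarkovChainFrom

lemma IsMarkovChainLaw.eq_of_isMarkovChainFrom [MeasurableSingletonClass α]
    {Pr : Kernel α (ℕ → α)} [IsMarkovKernel Pr] (h : IsMarkovChainLaw Pr Q)
    [IsProbabilityMeasure μ] (hμ : IsMarkovChainFrom Q x μ) : μ = Pr x :=
  hμ.unique (h.isMarkovChainFrom x)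

end MarkovChain

section MarkovSteps

variable {α : Type*} [MeasurableSpace α] {Q : Kernel α α} {x : α} {μ : Measure (ℕ → α)}

lemma IsMarkovChainFrom.map_comp {β : Type*} [MeasurableSpace β] [MeasurableSingletonClass β]
    {Q' : Kernel β β} {g : α → β} (hg : Measurable g) (hQ : ∀ a, (Q a).map g = Q' (g a))
    [IsProbabilityMeasure μ] (hμ : IsMarkovChainFrom Q x μ) :
    IsMarkovChainFrom Q' (g x) (μ.map fun ω t => g (ω t)) := by
  have hφ : Measurable fun (ω : ℕ → α) t => g (ω t) :=
    measurable_pi_lambda _ fun t => hg.comp (measurable_pi_apply t)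
  constructor
  · rw [Measure.map_apply hφ (measurableSet_coord_eq 0 _)]
    exact le_antisymm prob_le_one <| hμ.start ▸
      measure_mono fun ω (hω : ω 0 = x) => show g (ω 0) = g x from congrArg g hω
  · intro n B hB A hA
    have hB' : MeasurableSet[pathSigma α n] ((fun (ω : ℕ → α) t => g (ω t)) ⁻¹' B) :=
      comap_pathSigma_le (fun i hi => hg.comp (measurable_eval_pathSigma hi)) _ ⟨B, hB, rfl⟩
    have hBpi := pathSigma_le_pi n _ hB
    rw [Measure.map_apply hφ (hBpi.inter (measurableSet_coord_mem _ hA)),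
      preimage_inter, show (fun (ω : ℕ → α) t => g (ω t)) ⁻¹' {ω | ω (n + 1) ∈ A} =
        {ω | ω (n + 1) ∈ g ⁻¹' A} from rfl, hμ.markov n _ hB' _ (hg hA),
      setLIntegral_map (f := fun ω : ℕ → β => Q' (ω n) A) hBpi
        ((Q'.measurable_coe hA).comp (measurable_pi_apply n)) hφ]
    refine lintegral_congr fun ω => ?_
    rw [← hQ, Measure.map_apply hg hA]

namespace IsMarkovChainFrom

variable [MeasurableSingletonClass α]

lemma measure_coord_eq_inter_coord_succ_mem (hμ : IsMarkovChainFrom Q x μ) (n : ℕ) (k : α)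
    {A : Set α} (hA : MeasurableSet A) :
    μ ({ω | ω n = k} ∩ {ω | ω (n + 1) ∈ A}) = μ {ω | ω n = k} * Q k A := by
  have hk : MeasurableSet[pathSigma α n] {ω : ℕ → α | ω n = k} :=
    (measurableSet_singleton k).preimage (measurable_eval_pathSigma le_rfl)
  rw [hμ.markov n _ hk A hA, setLIntegral_congr_fun (pathSigma_le_pi n _ hk)
    fun ω (hω : ω n = k) => by rw [hω], setLIntegral_const, mul_comm]

lemma measure_coord_one_mem [IsProbabilityMeasure μ] (hμ : IsMarkovChainFrom Q x μ)
    {A : Set α} (hA : MeasurableSet A) : μ {ω | ω 1 ∈ A} = Q x A := by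
  have h := hμ.measure_coord_eq_inter_coord_succ_mem 0 x hA
  rwa [hμ.start, one_mul, inter_comm, measure_inter_conull hμ.ae_coord_zero_eq] at h

lemma measure_coord_one_eq [IsProbabilityMeasure μ] (hμ : IsMarkovChainFrom Q x μ) (z : α) :
    μ {ω | ω 1 = z} = Q x {z} :=
  hμ.measure_coord_one_mem (measurableSet_singleton z)

lemma ae_forall_coord_succ_mem [Countable α] (hμ : IsMarkovChainFrom Q x μ)
    (R : α → Set α) (hR : ∀ a, Q a (R a)ᶜ = 0) : ∀ᵐ ω ∂μ, ∀ t, ω (t + 1) ∈ R (ω t) := by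
  refine ae_all_iff.2 fun t => ?_
  have hbad : {ω : ℕ → α | ω (t + 1) ∉ R (ω t)} =
      ⋃ k, {ω | ω t = k} ∩ {ω | ω (t + 1) ∈ (R k)ᶜ} := by
    ext ω; simp
  rw [ae_iff, hbad]
  exact measure_iUnion_null fun k => by
    rw [hμ.measure_coord_eq_inter_coord_succ_mem t k (to_countable _).measurableSet, hR, mul_zero]

end IsMarkovChainFrom

def pathShift {α : Type*} (ω : ℕ → α) : ℕ → α := fun t => ω (t + 1)

lemma measurable_pathShift : Measurable (pathShift (α := α)) :=
  measurable_pi_lambda _ fun t => measurable_pi_apply (t + 1)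

lemma map_pathShift_restrict_apply {z : α} {E : Set (ℕ → α)} (hE : MeasurableSet E) :
    ((μ.restrict {ω | ω 1 = z}).map pathShift) E = μ (pathShift ⁻¹' E ∩ {ω | ω 1 = z}) := by
  rw [Measure.map_apply measurable_pathShift hE, Measure.restrict_apply (measurable_pathShift hE)]

lemma IsMarkovChainFrom.map_pathShift_restrict [MeasurableSingletonClass α]
    [IsProbabilityMeasure μ] (hμ : IsMarkovChainFrom Q x μ) {z : α} (hz : Q x {z} ≠ 0) :
    IsMarkovChainFrom Q z ((Q x {z})⁻¹ • (μ.restrict {ω | ω 1 = z}).map pathShift) := by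
  constructor
  · rw [Measure.smul_apply, map_pathShift_restrict_apply (measurableSet_coord_eq 0 z),
      show pathShift ⁻¹' {ω : ℕ → α | ω 0 = z} = {ω | ω 1 = z} from rfl, inter_self,
      hμ.measure_coord_one_eq, smul_eq_mul]
    exact ENNReal.inv_mul_cancel hz (hμ.measure_coord_one_eq z ▸ measure_ne_top μ _)
  · intro n B hB A hA
    have hB' : MeasurableSet[pathSigma α (n + 1)] (pathShift ⁻¹' B ∩ {ω | ω 1 = z}) :=
      (comap_pathSigma_le (fun _ hi => measurable_eval_pathSigma (by omega)) _
        ⟨B, hB, rfl⟩).inter ((measurableSet_singleton z).preimage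
          (measurable_eval_pathSigma (by omega)))
    have hBpi := pathSigma_le_pi n _ hB
    rw [Measure.smul_apply,
      map_pathShift_restrict_apply (hBpi.inter (measurableSet_coord_mem _ hA)),
      show pathShift ⁻¹' (B ∩ {ω | ω (n + 1) ∈ A}) ∩ {ω | ω 1 = z} =
        (pathShift ⁻¹' B ∩ {ω | ω 1 = z}) ∩ {ω | ω (n + 1 + 1) ∈ A} by
          ext ω; simp only [mem_inter_iff, mem_preimage, mem_ofPred_eq, pathShift]; tauto,
      hμ.markov (n + 1) _ hB' A hA, Measure.restrict_smul, lintegral_smul_measure,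
      setLIntegral_map (f := fun ω : ℕ → α => Q (ω n) A) hBpi
        ((Q.measurable_coe hA).comp (measurable_pi_apply n)) measurable_pathShift,
      Measure.restrict_restrict (measurable_pathShift hBpi)]
    rfl

lemma IsMarkovChainLaw.map_pathShift_restrict [MeasurableSingletonClass α]
    {Pr : Kernel α (ℕ → α)} [IsMarkovKernel Pr] (h : IsMarkovChainLaw Pr Q) (x z : α) :
    ((Pr x).restrict {ω | ω 1 = z}).map pathShift = Q x {z} • Pr z := by
  have hz1 := (h.isMarkovChainFrom x).measure_coord_one_eq z
  by_cases hz : Q x {z} = 0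
  · rw [hz, zero_smul, Measure.restrict_eq_zero.2 (hz1.trans hz), Measure.map_zero]
  · have hc : Q x {z} ≠ ⊤ := hz1 ▸ measure_ne_top _ _
    have : IsProbabilityMeasure
        ((Q x {z})⁻¹ • ((Pr x).restrict {ω | ω 1 = z}).map pathShift) :=
      ⟨by rw [Measure.smul_apply, map_pathShift_restrict_apply .univ, preimage_univ, univ_inter,
        hz1, smul_eq_mul, ENNReal.inv_mul_cancel hz hc]⟩
    rw [← h.eq_of_isMarkovChainFrom ((h.isMarkovChainFrom x).map_pathShift_restrict hz),
      smul_smul, ENNReal.mul_inv_cancel hz hc, one_smul]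

end MarkovSteps

section FirstTime

-- `hitTime S ω` and `walkHit ω` are definitionally `firstTime` of `1 ≤ t ∧ ω t ∈ S` and of
-- `ω t = 0`, so the lemmas below apply to them directly.
def firstTime (P : ℕ → Prop) : ℕ∞ := sInf {n : ℕ∞ | ∃ t : ℕ, n = t ∧ P t}

variable {P : ℕ → Prop}

lemma firstTime_le {t : ℕ} (h : P t) : firstTime P ≤ t :=
  sInf_le ⟨t, rfl, h⟩

lemma le_firstTime {n : ℕ∞} (h : ∀ t, P t → n ≤ t) : n ≤ firstTime P :=
  le_sInf <| by rintro _ ⟨t, rfl, ht⟩; exact h t ht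

lemma firstTime_eq_top_iff : firstTime P = ⊤ ↔ ∀ t, ¬P t :=
  ⟨fun h t ht => ENat.natCast_ne_top t (top_unique (h ▸ firstTime_le ht)),
    fun h => sInf_eq_top.2 <| by rintro _ ⟨t, -, ht⟩; exact (h t ht).elim⟩

lemma firstTime_eq_coe_iff {t : ℕ} : firstTime P = t ↔ P t ∧ ∀ s < t, ¬P s := by
  refine ⟨fun h => ?_, fun ⟨ht, hmin⟩ => le_antisymm (firstTime_le ht) (le_firstTime fun s hs =>
    Nat.cast_le.2 (not_lt.1 fun hst => hmin s hst hs))⟩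
  obtain ⟨t', ht', hPt'⟩ : firstTime P ∈ {n : ℕ∞ | ∃ t : ℕ, n = t ∧ P t} :=
    csInf_mem <| not_not.1 fun hempty => by
      simp [firstTime, not_nonempty_iff_eq_empty.1 hempty] at h
  obtain rfl : t' = t := Nat.cast_injective (ht'.symm.trans h)
  exact ⟨hPt', fun s hst hs => (firstTime_le hs).not_gt (h ▸ Nat.cast_lt.2 hst)⟩

lemma measurable_firstTime {Ω : Type*} [MeasurableSpace Ω] {P : ℕ → Ω → Prop}
    (hP : ∀ t, MeasurableSet {ω | P t ω}) : Measurable fun ω => firstTime (P · ω) := by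
  refine measurable_to_countable' fun k => ?_
  induction k using ENat.recTopCoe with
  | top =>
    simp only [preimage, mem_singleton_iff, firstTime_eq_top_iff, ofPred_forall]
    exact .iInter fun t => (hP t).compl
  | coe k =>
    simp only [preimage, mem_singleton_iff, firstTime_eq_coe_iff, ofPred_and, ofPred_forall]
    exact (hP k).inter (.iInter fun s => .iInter fun _ => (hP s).compl)

end FirstTime

section HittingTimes

lemma norm_stopPayoff_le {α : Type*} {δ : ℕ → ℝ} {f : α → ℝ} {S : Set α} {ω : ℕ → α} {C : ℝ}
    (hδ : ∀ t, ‖δ t‖ ≤ 1) (hf : ∀ t, ‖f (ω t)‖ ≤ C) : ‖stopPayoff δ f S ω‖ ≤ C := by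
  unfold stopPayoff
  split_ifs
  · simpa using (norm_nonneg _).trans (hf 0)
  · exact (norm_mul_le _ _).trans <| by
      simpa using mul_le_mul (hδ _) (hf _) (norm_nonneg _) zero_le_one

variable {α : Type*} [MeasurableSpace α]

lemma measurable_hitTime {S : Set α} (hS : MeasurableSet S) : Measurable (hitTime S) :=
  measurable_firstTime fun t => (MeasurableSet.const (1 ≤ t)).inter (measurableSet_coord_mem t hS)

lemma measurable_walkHit : Measurable walkHit :=
  measurable_firstTime fun t => measurableSet_coord_eq t 0

lemma measurable_stopPayoff {δ : ℕ → ℝ} {f : α → ℝ} {S : Set α}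
    (hf : Measurable f) (hS : MeasurableSet S) : Measurable (stopPayoff δ f S) := by
  have hg : Measurable fun q : (ℕ → α) × ℕ∞ =>
      if q.2 = ⊤ then (0 : ℝ) else δ q.2.toNat * f (q.1 q.2.toNat) := by
    refine measurable_from_prod_countable_left fun k => ?_
    induction k using ENat.recTopCoe with
    | top => simp
    | coe t =>
      simp only [ENat.natCast_ne_top, if_false, ENat.toNat_natCast]
      exact measurable_const.mul (hf.comp (measurable_pi_apply t))
  exact hg.comp (measurable_id.prodMk (measurable_hitTime hS))

lemma measurable_walkDisc (β : ℝ) (s : ℕ) : Measurable (walkDisc β s) :=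
  (Measurable.of_discrete (f := fun n : ℕ∞ =>
    if n = ⊤ then (0 : ℝ) else 1 / (1 + β * (n.toNat + s)))).comp measurable_walkHit

end HittingTimes

section IntegerPaths

variable {ω : ℕ → ℤ}

lemma exists_le_eq_zero_of_nonpos (hstep : ∀ t, ω t - 1 ≤ ω (t + 1)) (h0 : 0 ≤ ω 0) {t : ℕ}
    (ht : ω t ≤ 0) : ∃ s ≤ t, ω s = 0 := by
  induction t with
  | zero => exact ⟨0, le_rfl, le_antisymm ht h0⟩
  | succ t ih =>
    by_cases h : ω t ≤ 0
    · obtain ⟨s, hs, hs0⟩ := ih h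
      exact ⟨s, hs.trans t.le_succ, hs0⟩
    · exact ⟨t + 1, le_rfl, by linarith [hstep t]⟩

lemma firstTime_nonpos_of_coord_one_eq_neg_one (h1 : ω 1 = -1) :
    firstTime (fun t => 1 ≤ t ∧ ω t ≤ 0) = 1 :=
  le_antisymm (firstTime_le (t := 1) ⟨le_rfl, by omega⟩)
    (le_firstTime fun _ ht => Nat.one_le_cast.2 ht.1)

lemma firstTime_nonpos_of_coord_one_eq_one (hstep : ∀ t, ω t - 1 ≤ ω (t + 1)) (h1 : ω 1 = 1) :
    firstTime (fun t => 1 ≤ t ∧ ω t ≤ 0) = walkHit (pathShift ω) + 1 := by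
  refine le_antisymm ?_ (le_firstTime ?_)
  · induction h : walkHit (pathShift ω) using ENat.recTopCoe with
    | top => simp
    | coe s =>
      have hs : ω (s + 1) = 0 := (firstTime_eq_coe_iff.1 h).1
      exact_mod_cast firstTime_le (P := fun t => 1 ≤ t ∧ ω t ≤ 0) (t := s + 1)
        ⟨le_add_self, hs.le⟩
  · rintro (_ | t) ⟨ht, hnonpos⟩
    · omega
    obtain ⟨s, hst, hs⟩ := exists_le_eq_zero_of_nonpos (ω := pathShift ω)
      (fun t => hstep (t + 1)) (by simp [pathShift, h1]) hnonpos
    have : walkHit (pathShift ω) ≤ t :=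
      (firstTime_le (P := fun t => pathShift ω t = 0) hs).trans (Nat.cast_le.2 hst)
    push_cast
    gcongr

end IntegerPaths

section BinomialPaths

variable {u y : ℝ} {ω : ℕ → ℤ}

lemma countable_binGrid (u : ℝ) : (binGrid u).Countable :=
  (countable_range fun i : ℤ => u ^ i).mono <| by rintro _ ⟨i, rfl⟩; exact ⟨i, rfl⟩

def binPath (y u : ℝ) (ω : ℕ → ℤ) : ℕ → ℝ := fun t => y * u ^ ω t

lemma measurable_binPath (y u : ℝ) : Measurable (binPath y u) :=
  measurable_pi_lambda _ fun t =>
    (measurable_of_countable fun k : ℤ => y * u ^ k).comp (measurable_pi_apply t)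

lemma mul_zpow_mem_Ioc_inter_binGrid_iff (hu : 1 < u) (hy : y ∈ binGrid u) (hy0 : 0 < y)
    (m : ℤ) : y * u ^ m ∈ Ioc 0 y ∩ binGrid u ↔ m ≤ 0 := by
  obtain ⟨j, rfl⟩ := hy
  have hu0 : 0 < u := one_pos.trans hu
  constructor
  · rintro ⟨⟨-, hle⟩, -⟩
    exact (zpow_le_one_iff_right₀ hu).1 ((mul_le_iff_le_one_right hy0).1 hle)
  · intro hm
    exact ⟨⟨by positivity, mul_le_of_le_one_right hy0.le (zpow_le_one_of_nonpos₀ hu.le hm)⟩,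
      j + m, by rw [zpow_add₀ hu0.ne']⟩

lemma hitTime_binPath (hu : 1 < u) (hy : y ∈ binGrid u) (hy0 : 0 < y) (ω : ℕ → ℤ) :
    hitTime (Ioc 0 y ∩ binGrid u) (binPath y u ω) = firstTime (fun t => 1 ≤ t ∧ ω t ≤ 0) := by
  simp only [hitTime, binPath, mul_zpow_mem_Ioc_inter_binGrid_iff hu hy hy0]
  rfl

lemma stopPayoff_binPath_of_coord_one_eq_neg_one {δ : ℕ → ℝ} {f : ℝ → ℝ} (hu : 1 < u)
    (hy : y ∈ binGrid u) (hy0 : 0 < y) (h1 : ω 1 = -1) :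
    stopPayoff δ f (Ioc 0 y ∩ binGrid u) (binPath y u ω) = δ 1 * f (y / u) := by
  rw [stopPayoff, hitTime_binPath hu hy hy0, firstTime_nonpos_of_coord_one_eq_neg_one h1]
  simp [binPath, h1, div_eq_mul_inv]

lemma stopPayoff_binPath_of_coord_one_eq_one {β : ℝ} {f : ℝ → ℝ} (hu : 1 < u)
    (hy : y ∈ binGrid u) (hy0 : 0 < y) (hstep : ∀ t, ω t - 1 ≤ ω (t + 1)) (h1 : ω 1 = 1) :
    stopPayoff (binDisc β) f (Ioc 0 y ∩ binGrid u) (binPath y u ω) =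
      f y * walkDisc β 1 (pathShift ω) := by
  rw [stopPayoff, hitTime_binPath hu hy hy0, firstTime_nonpos_of_coord_one_eq_one hstep h1,
    walkDisc]
  induction h : walkHit (pathShift ω) using ENat.recTopCoe with
  | top => simp
  | coe s =>
    have hs : ω (s + 1) = 0 := (firstTime_eq_coe_iff.1 h).1
    rw [← Nat.cast_add_one, ENat.toNat_natCast]
    simp [binPath, hs, binDisc, mul_comm]

end BinomialPaths

section BinomialModel

variable {p β : ℝ} {PrY : Kernel ℤ (ℕ → ℤ)} {QY : Kernel ℤ ℤ}

lemma norm_binDisc_le_one (hβ : 0 ≤ β) (t : ℕ) : ‖binDisc β t‖ ≤ 1 := by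
  rw [binDisc, norm_div, norm_one, Real.norm_of_nonneg (by positivity)]
  exact div_le_one_of_le₀ (le_add_of_nonneg_right (by positivity)) (by positivity)

lemma measurable_binPay (K : ℝ) : Measurable (binPay K) :=
  (measurable_const.sub measurable_id).max measurable_const

lemma norm_binPay_le {K x : ℝ} (hK : 0 ≤ K) (hx : 0 ≤ x) : ‖binPay K x‖ ≤ K := by
  rw [binPay, Real.norm_of_nonneg (le_max_right _ _)]
  exact max_le (by linarith) hK

lemma walkDisc_nonneg (hβ : 0 ≤ β) (s : ℕ) (ω : ℕ → ℤ) : 0 ≤ walkDisc β s ω := by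
  unfold walkDisc
  split_ifs <;> positivity

lemma walkDisc_one_le (hβ : 0 ≤ β) (ω : ℕ → ℤ) : walkDisc β 1 ω ≤ 1 / (1 + β) := by
  unfold walkDisc
  split_ifs
  · positivity
  · push_cast
    gcongr
    nlinarith [(Nat.cast_nonneg _ : (0 : ℝ) ≤ (walkHit ω).toNat)]

lemma alphaWalk'_le [IsMarkovKernel PrY] (hβ : 0 ≤ β) : alphaWalk' PrY β ≤ 1 / (1 + β) := by
  calc alphaWalk' PrY β ≤ ∫ _, 1 / (1 + β) ∂(PrY 1) :=
        integral_mono_of_nonneg (ae_of_all _ (walkDisc_nonneg hβ 1)) (integrable_const _)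
          (ae_of_all _ (walkDisc_one_le hβ))
    _ = 1 / (1 + β) := by simp

lemma ae_walk_steps [IsMarkovKernel PrY] (hwalk : IsMarkovChainLaw PrY QY)
    (hQY : ∀ n : ℤ, QY n = ENNReal.ofReal p • Measure.dirac (n + 1)
      + ENNReal.ofReal (1 - p) • Measure.dirac (n - 1)) (x : ℤ) :
    ∀ᵐ ω ∂(PrY x), ω 0 = x ∧ ∀ t, ω (t + 1) = ω t + 1 ∨ ω (t + 1) = ω t - 1 :=
  (hwalk.isMarkovChainFrom x).ae_coord_zero_eq.and <|
    (hwalk.isMarkovChainFrom x).ae_forall_coord_succ_mem (fun k => {k + 1, k - 1})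
      fun k => by simp [hQY]

end BinomialModel

section BinomialValue

variable {u p β y : ℝ} {Pr : Kernel ℝ (ℕ → ℝ)} {Q : Kernel ℝ ℝ}
  {PrY : Kernel ℤ (ℕ → ℤ)} {QY : Kernel ℤ ℤ}

lemma map_walk_binPath [IsMarkovKernel Pr] [IsMarkovKernel PrY] (hu : 1 < u)
    (hchain : IsMarkovChainLaw Pr Q)
    (hQ : ∀ x : ℝ, Q x = ENNReal.ofReal p • Measure.dirac (u * x)
      + ENNReal.ofReal (1 - p) • Measure.dirac (x / u))
    (hwalk : IsMarkovChainLaw PrY QY)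
    (hQY : ∀ n : ℤ, QY n = ENNReal.ofReal p • Measure.dirac (n + 1)
      + ENNReal.ofReal (1 - p) • Measure.dirac (n - 1)) (y : ℝ) :
    (PrY 0).map (binPath y u) = Pr y := by
  have hu0 : u ≠ 0 := (one_pos.trans hu).ne'
  have hg : Measurable fun k : ℤ => y * u ^ k := measurable_of_countable _
  have hQg : ∀ k : ℤ, (QY k).map (fun k => y * u ^ k) = Q (y * u ^ k) := fun k => by
    rw [hQY, hQ, Measure.map_add _ _ hg, Measure.map_smul, Measure.map_smul,
      Measure.map_dirac' hg, Measure.map_dirac' hg, zpow_add_one₀ hu0, zpow_sub_one₀ hu0]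
    ring_nf
  have hμ := (hwalk.isMarkovChainFrom 0).map_comp hg hQg
  rw [zpow_zero, mul_one] at hμ
  have := Measure.isProbabilityMeasure_map (μ := PrY 0) (measurable_binPath y u).aemeasurable
  exact hchain.eq_of_isMarkovChainFrom hμ

lemma setIntegral_coord_one_eq_one_walkDisc_pathShift [IsMarkovKernel PrY] (hp0 : 0 ≤ p)
    (hwalk : IsMarkovChainLaw PrY QY)
    (hQY : ∀ n : ℤ, QY n = ENNReal.ofReal p • Measure.dirac (n + 1)
      + ENNReal.ofReal (1 - p) • Measure.dirac (n - 1)) (β : ℝ) :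
    ∫ ω in {ω | ω 1 = 1}, walkDisc β 1 (pathShift ω) ∂(PrY 0) = p * alphaWalk' PrY β := by
  rw [← integral_map measurable_pathShift.aemeasurable
    (measurable_walkDisc β 1).aestronglyMeasurable, hwalk.map_pathShift_restrict 0 1,
    integral_smul_measure, hQY]
  simp [alphaWalk', hp0]

theorem valJ_Ioc_inter_binGrid [IsMarkovKernel Pr] [IsMarkovKernel PrY] (hu : 1 < u)
    (hp0 : 0 ≤ p) (hp1 : p ≤ 1) (hβ : 0 ≤ β) (hchain : IsMarkovChainLaw Pr Q)
    (hQ : ∀ x : ℝ, Q x = ENNReal.ofReal p • Measure.dirac (u * x)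
      + ENNReal.ofReal (1 - p) • Measure.dirac (x / u))
    (hwalk : IsMarkovChainLaw PrY QY)
    (hQY : ∀ n : ℤ, QY n = ENNReal.ofReal p • Measure.dirac (n + 1)
      + ENNReal.ofReal (1 - p) • Measure.dirac (n - 1))
    (hy : y ∈ binGrid u) (hy0 : 0 < y) {f : ℝ → ℝ} (hf : Measurable f) {C : ℝ}
    (hfC : ∀ x, 0 < x → ‖f x‖ ≤ C) :
    valJ Pr (binDisc β) f (Ioc 0 y ∩ binGrid u) y =
      (1 - p) * (binDisc β 1 * f (y / u)) + p * (f y * alphaWalk' PrY β) := by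
  have hS : MeasurableSet (Ioc 0 y ∩ binGrid u) :=
    measurableSet_Ioc.inter (countable_binGrid u).measurableSet
  have hstop := measurable_stopPayoff (δ := binDisc β) hf hS
  have hint : Integrable (fun ω => stopPayoff (binDisc β) f (Ioc 0 y ∩ binGrid u)
      (binPath y u ω)) (PrY 0) :=
    .of_bound (hstop.comp (measurable_binPath y u)).aestronglyMeasurable C <| ae_of_all _ fun ω =>
      norm_stopPayoff_le (norm_binDisc_le_one hβ) fun t => hfC _ (by unfold binPath; positivity)
  have hdown : MeasurableSet {ω : ℕ → ℤ | ω 1 = -1} := measurableSet_coord_eq 1 (-1)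
  have hsteps := ae_walk_steps hwalk hQY 0
  have hup : ({ω : ℕ → ℤ | ω 1 = -1}ᶜ : Set (ℕ → ℤ)) =ᵐ[PrY 0] {ω | ω 1 = 1} :=
    hsteps.mono fun ω ⟨h0, hs⟩ => by
      have := hs 0
      simp only [h0, zero_add] at this
      show (ω ∈ {ω : ℕ → ℤ | ω 1 = -1}ᶜ) = (ω ∈ {ω : ℕ → ℤ | ω 1 = 1})
      simp only [mem_compl_iff, mem_ofPred_eq, eq_iff_iff]
      omega
  rw [valJ, ← map_walk_binPath hu hchain hQ hwalk hQY y,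
    integral_map (measurable_binPath y u).aemeasurable hstop.aestronglyMeasurable,
    ← integral_add_compl hdown hint]
  congr 1
  · rw [setIntegral_congr_fun hdown fun ω h1 =>
      stopPayoff_binPath_of_coord_one_eq_neg_one hu hy hy0 h1, setIntegral_const,
      measureReal_def, (hwalk.isMarkovChainFrom 0).measure_coord_one_eq, hQY]
    simp [ENNReal.toReal_ofReal (sub_nonneg.2 hp1)]
  · rw [setIntegral_congr_set hup, setIntegral_congr_ae (measurableSet_coord_eq 1 1) <|
      hsteps.mono fun ω ⟨_, hs⟩ h1 => stopPayoff_binPath_of_coord_one_eq_one hu hy hy0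
        (fun t => by rcases hs t with h | h <;> omega) h1, integral_const_mul,
      setIntegral_coord_one_eq_one_walkDisc_pathShift hp0 hwalk hQY β]
    ring

end BinomialValue

lemma le_div_mul_of_value_le {u p β a y K : ℝ} (hu : 1 ≤ u) (hp0 : 0 ≤ p) (hp1 : p ≤ 1)
    (hβ : 0 < β) (ha : a ≤ 1 / (1 + β))
    (hval : (1 - p) * (1 / (1 + β) * (K - y / u)) + p * ((K - y) * a) ≤ K - y) :
    y ≤ (1 - (1 - p) / (1 + β) - p * a) / (1 - (1 - p) / (u * (1 + β)) - p * a) * K := by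
  have hD : 0 < 1 - (1 - p) / (u * (1 + β)) - p * a := by
    have hdown : (1 - p) / (u * (1 + β)) ≤ (1 - p) / (1 + β) :=
      div_le_div_of_nonneg_left (sub_nonneg.2 hp1) (by positivity)
        (le_mul_of_one_le_left (by positivity) hu)
    have hup : p * a ≤ p / (1 + β) := by
      rw [div_eq_mul_one_div]
      exact mul_le_mul_of_nonneg_left ha hp0
    have hsum : (1 - p) / (1 + β) + p / (1 + β) < 1 := by
      rw [← add_div, sub_add_cancel, div_lt_one (by linarith)]
      linarith
    linarith
  have hu0 : u ≠ 0 := by positivity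
  rw [div_mul_eq_mul_div, le_div_iff₀ hD]
  have hexpand : (1 - (1 - p) / (1 + β) - p * a) * K - y * (1 - (1 - p) / (u * (1 + β)) - p * a)
      = (K - y) - ((1 - p) * (1 / (1 + β) * (K - y / u)) + p * ((K - y) * a)) := by
    field_simp
    ring
  linarith

theorem binomial_equilibrium_upper_bound_general
    (u p β K : ℝ) (hu : 1 < u) (hp_lb : 1 / (u + 1) ≤ p) (hp_ub : p < 1)
    (hβ : 0 < β)
    (Pr : Kernel ℝ (ℕ → ℝ)) [IsMarkovKernel Pr] (Q : Kernel ℝ ℝ)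
    (hchain : IsMarkovChainLaw Pr Q)
    (hQ : ∀ x : ℝ, Q x = ENNReal.ofReal p • Measure.dirac (u * x)
      + ENNReal.ofReal (1 - p) • Measure.dirac (x / u))
    (PrY : Kernel ℤ (ℕ → ℤ)) [IsMarkovKernel PrY] (QY : Kernel ℤ ℤ)
    (hwalk : IsMarkovChainLaw PrY QY)
    (hQY : ∀ n : ℤ, QY n = ENNReal.ofReal p • Measure.dirac (n + 1)
      + ENNReal.ofReal (1 - p) • Measure.dirac (n - 1))
    (y : ℝ) (hy_mem : y ∈ binGrid u) (hy_pos : 0 < y) (hyK : y < K)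
    (hS : ΘBin Pr u β K (Set.Ioc 0 y ∩ binGrid u) = Set.Ioc 0 y ∩ binGrid u) :
    y ≤ ((1 - (1 - p) / (1 + β) - p * alphaWalk' PrY β) /
      (1 - (1 - p) / (u * (1 + β)) - p * alphaWalk' PrY β)) * K := by
  have hp0 : 0 ≤ p := (by positivity : (0 : ℝ) ≤ 1 / (u + 1)).trans hp_lb
  have hpay : ∀ x ≤ K, binPay K x = K - x := fun x hx => max_eq_left (sub_nonneg.2 hx)
  have hyΘ : y ∈ ΘBin Pr u β K (Ioc 0 y ∩ binGrid u) := by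
    rw [hS]
    exact ⟨⟨hy_pos, le_rfl⟩, hy_mem⟩
  have hJ := hyΘ.2
  rw [valJ_Ioc_inter_binGrid hu hp0 hp_ub.le hβ.le hchain hQ hwalk hQY hy_mem hy_pos
      (measurable_binPay K) fun x hx => norm_binPay_le (hy_pos.trans hyK).le hx.le,
    hpay y hyK.le, hpay (y / u) ((div_le_self hy_pos.le hu.le).trans hyK.le), binDisc,
    Nat.cast_one, mul_one] at hJ
  exact le_div_mul_of_value_le hu.le hp0 hp_ub.le hβ (alphaWalk'_le hβ.le) hJ

/-- In the binomial model, if `S = (0,y] ∩ 𝕏` is an equilibrium with `y ∈ S ∩ (0,K)`,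
then `y ≤ U·K` with `U = (1 − (1−p)/(1+β) − p α') / (1 − (1−p)/(u(1+β)) − p α')`. -/
theorem binomial_equilibrium_upper_bound
    (u p β K : ℝ) (hu : 1 < u) (hp_lb : 1 / (u + 1) ≤ p) (hp_ub : p < 1)
    (hβ : 0 < β) (hK : 0 < K)
    (Pr : Kernel ℝ (ℕ → ℝ)) [IsMarkovKernel Pr] (Q : Kernel ℝ ℝ) [IsMarkovKernel Q]
    (hchain : IsMarkovChainLaw Pr Q)
    (hQ : ∀ x : ℝ, Q x = ENNReal.ofReal p • Measure.dirac (u * x)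
      + ENNReal.ofReal (1 - p) • Measure.dirac (x / u))
    (PrY : Kernel ℤ (ℕ → ℤ)) [IsMarkovKernel PrY] (QY : Kernel ℤ ℤ) [IsMarkovKernel QY]
    (hwalk : IsMarkovChainLaw PrY QY)
    (hQY : ∀ n : ℤ, QY n = ENNReal.ofReal p • Measure.dirac (n + 1)
      + ENNReal.ofReal (1 - p) • Measure.dirac (n - 1))
    (y : ℝ) (hy_mem : y ∈ binGrid u) (hy_pos : 0 < y) (hyK : y < K)
    (hS : ΘBin Pr u β K (Set.Ioc 0 y ∩ binGrid u) = Set.Ioc 0 y ∩ binGrid u) :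
    y ≤ ((1 - (1 - p) / (1 + β) - p * alphaWalk' PrY β) /
      (1 - (1 - p) / (u * (1 + β)) - p * alphaWalk' PrY β)) * K :=
  binomial_equilibrium_upper_bound_general u p β K hu hp_lb hp_ub hβ Pr Q hchain hQ PrY QY hwalk hQY
    y hy_mem hy_pos hyK hS
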